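/- Let c be a GBSC code for (𝒳, p). Then the expected code length satisfies L(c) < H(X) + 1, where H(X) = ∑_{x∈𝒳} −p(x)·log₂ p(x) is the entropy of the distribution p. -/

import Mathlib

/-!
Walk down the codeword of `x`, of length `ℓ + 1`, from the root. Greediness means that
moving any nonempty set `T` of symbols from the chosen child to its sibling does not
improve the balance, and this yields `2 P(w b) ≤ P(w) + P(T)`, i.e. the masses
`P(w) - P(T)` at least halve at every level. Taking for `T` the lighter of `{x}` and the
other symbols below the parent of the leaf gives `2 ^ ℓ * p x < 1`, that is
`|c x| < 1 - log₂ p x`; averaging over `p` gives `L(c) < H + 1`.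
-/

open Finset

def codeS {α : Type*} [DecidableEq α] (X : Finset α) (c : α → List Bool)
    (w : List Bool) : Finset α :=
  X.filter fun x => w <+: c x

def codeP {α : Type*} [DecidableEq α] (X : Finset α) (p : α → ℝ) (c : α → List Bool)
    (w : List Bool) : ℝ :=
  ∑ x ∈ codeS X c w, p x

def IsPrefixCode {α : Type*} [DecidableEq α] (X : Finset α) (c : α → List Bool) : Prop :=
  Set.InjOn c X ∧ ∀ x ∈ X, ∀ y ∈ X, x ≠ y → ¬ (c x <+: c y)

def IsGBSC {α : Type*} [DecidableEq α] (X : Finset α) (p : α → ℝ)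
    (c : α → List Bool) : Prop :=
  IsPrefixCode X c ∧
  (∀ w : List Bool, ∀ x ∈ X, codeS X c w = {x} → c x = w) ∧
  (∀ w : List Bool, 2 ≤ (codeS X c w).card →
    ∀ A B : Finset α, Disjoint A B → A ∪ B = codeS X c w →
      |codeP X p c (w ++ [false]) - codeP X p c (w ++ [true])| ≤
        |(∑ x ∈ A, p x) - ∑ x ∈ B, p x|)

section CodeTree

variable {α : Type*} [DecidableEq α] (X : Finset α) (p : α → ℝ) (c : α → List Bool)

@[simp]
lemma codeS_nil : codeS X c [] = X :=
  filter_true_of_mem fun _ _ => List.nil_prefix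

lemma codeP_nil : codeP X p c [] = ∑ x ∈ X, p x := by
  rw [codeP, codeS_nil]

lemma mem_codeS {w : List Bool} {x : α} : x ∈ codeS X c w ↔ x ∈ X ∧ w <+: c x :=
  mem_filter

lemma codeS_subset_of_prefix {w w' : List Bool} (h : w <+: w') :
    codeS X c w' ⊆ codeS X c w := fun _ hy =>
  (mem_codeS X c).2 ⟨((mem_codeS X c).1 hy).1, h.trans ((mem_codeS X c).1 hy).2⟩

lemma disjoint_codeS_append_false_true (w : List Bool) :
    Disjoint (codeS X c (w ++ [false])) (codeS X c (w ++ [true])) := by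
  refine disjoint_left.2 fun y h₀ h₁ => ?_
  have h := (List.prefix_of_prefix_length_le ((mem_codeS X c).1 h₀).2
    ((mem_codeS X c).1 h₁).2 (by simp)).eq_of_length (by simp)
  simp at h

lemma codeS_eq_union_of_forall_ne {w : List Bool} (hw : ∀ y ∈ codeS X c w, c y ≠ w) :
    codeS X c w = codeS X c (w ++ [false]) ∪ codeS X c (w ++ [true]) := by
  refine Subset.antisymm (fun y hy => ?_) (union_subset
    (codeS_subset_of_prefix X c (List.prefix_append _ _))
    (codeS_subset_of_prefix X c (List.prefix_append _ _)))
  obtain ⟨hyX, t, ht⟩ := (mem_codeS X c).1 hy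
  obtain _ | ⟨b, t⟩ := t
  · exact absurd (by simpa using ht.symm) (hw y hy)
  · have hb : w ++ [b] <+: c y := ⟨t, by simpa using ht⟩
    cases b
    · exact mem_union_left _ ((mem_codeS X c).2 ⟨hyX, hb⟩)
    · exact mem_union_right _ ((mem_codeS X c).2 ⟨hyX, hb⟩)

lemma codeP_eq_add_of_forall_ne {w : List Bool} (hw : ∀ y ∈ codeS X c w, c y ≠ w) :
    codeP X p c w = codeP X p c (w ++ [false]) + codeP X p c (w ++ [true]) := by
  rw [codeP, codeS_eq_union_of_forall_ne X c hw,
    sum_union (disjoint_codeS_append_false_true X c w), codeP, codeP]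

variable {X c} in
lemma IsPrefixCode.ne_of_mem_codeS (hc : IsPrefixCode X c)
    {w : List Bool} (hw : 2 ≤ #(codeS X c w)) {y : α} (hy : y ∈ codeS X c w) :
    c y ≠ w := by
  rintro rfl
  obtain ⟨z, hz, hzy⟩ := exists_mem_ne hw y
  exact hc.2 y ((mem_codeS X c).1 hy).1 z ((mem_codeS X c).1 hz).1 hzy.symm
    ((mem_codeS X c).1 hz).2

end CodeTree

lemma le_of_abs_le_abs_two_mul_sub {d t : ℝ} (ht : 0 < t) (h : |d| ≤ |2 * t - d|) : d ≤ t := by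
  have h2 : d ^ 2 ≤ (2 * t - d) ^ 2 := sq_le_sq.2 h
  nlinarith

namespace IsGBSC

variable {α : Type*} [DecidableEq α] {X : Finset α} {p : α → ℝ} {c : α → List Bool}

lemma two_mul_codeP_append_le (hc : IsGBSC X p c) {w : List Bool}
    (hw : 2 ≤ #(codeS X c w)) (b : Bool) {T : Finset α} (hT : T ⊆ codeS X c (w ++ [b]))
    (ht : 0 < ∑ y ∈ T, p y) :
    2 * codeP X p c (w ++ [b]) ≤ codeP X p c w + ∑ y ∈ T, p y := by
  have hsplit := codeP_eq_add_of_forall_ne X p c fun y hy => hc.1.ne_of_mem_codeS hw hy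
  have hsub : codeS X c (w ++ [b]) ⊆ codeS X c w :=
    codeS_subset_of_prefix X c (List.prefix_append _ _)
  -- Move `T` from the child `w ++ [b]` to its sibling.
  set B := codeS X c (w ++ [b]) \ T
  have hB : B ⊆ codeS X c w := sdiff_subset.trans hsub
  have hgreedy := hc.2.2 w hw (codeS X c w \ B) B disjoint_sdiff_self_left
    (sdiff_union_of_subset hB)
  have hBsum : ∑ y ∈ B, p y = codeP X p c (w ++ [b]) - ∑ y ∈ T, p y := sum_sdiff_eq_sub hT
  rw [sum_sdiff_eq_sub hB, hBsum, ← codeP] at hgreedy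
  have hbalance : |codeP X p c (w ++ [false]) - codeP X p c (w ++ [true])| =
      |2 * codeP X p c (w ++ [b]) - codeP X p c w| := by
    cases b
    · rw [hsplit]; ring_nf
    · rw [hsplit, abs_sub_comm]; ring_nf
  rw [hbalance] at hgreedy
  have := le_of_abs_le_abs_two_mul_sub (d := 2 * codeP X p c (w ++ [b]) - codeP X p c w) ht
    (by convert hgreedy using 2; ring)
  linarith

lemma two_pow_length_mul_sub_le (hc : IsGBSC X p c) {v : List Bool}
    (hv : ∀ w, w <+: v → w ≠ v → 2 ≤ #(codeS X c w)) {T : Finset α}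
    (hT : T ⊆ codeS X c v) (ht : 0 < ∑ y ∈ T, p y) :
    2 ^ v.length * (codeP X p c v - ∑ y ∈ T, p y) ≤ codeP X p c [] - ∑ y ∈ T, p y := by
  induction v using List.reverseRecOn with
  | nil => simp
  | append_singleton u b ih =>
    have hu : ∀ w, w <+: u → w ≠ u → 2 ≤ #(codeS X c w) := fun w hw hne =>
      hv w (hw.trans (List.prefix_append _ _)) fun h => by
        have := hw.length_le; rw [h] at this; simp at this
    have hstep := hc.two_mul_codeP_append_le
      (hv u (List.prefix_append _ _) (by simp)) b hT ht
    have ih := ih hu (hT.trans (codeS_subset_of_prefix X c (List.prefix_append _ _)))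
    calc 2 ^ (u ++ [b]).length * (codeP X p c (u ++ [b]) - ∑ y ∈ T, p y)
        = 2 ^ u.length * (2 * codeP X p c (u ++ [b]) - 2 * ∑ y ∈ T, p y) := by
          rw [List.length_append, List.length_singleton, pow_succ]; ring
      _ ≤ 2 ^ u.length * (codeP X p c u - ∑ y ∈ T, p y) :=
          mul_le_mul_of_nonneg_left (by linarith) (by positivity)
      _ ≤ codeP X p c [] - ∑ y ∈ T, p y := ih

lemma two_le_card_codeS_of_prefix (hc : IsGBSC X p c) {x : α} (hx : x ∈ X)
    {w : List Bool} (hw : w <+: c x) (hne : w ≠ c x) : 2 ≤ #(codeS X c w) := by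
  have hxw : x ∈ codeS X c w := (mem_codeS X c).2 ⟨hx, hw⟩
  by_contra! hlt
  have : codeS X c w = {x} :=
    eq_singleton_iff_unique_mem.2 ⟨hxw, fun y hy => card_le_one.1 (by omega) y hy x hxw⟩
  exact hne (hc.2.1 w x hx this).symm

lemma mul_two_pow_length_lt_two (hc : IsGBSC X p c) (hp : ∀ x ∈ X, 0 < p x)
    (hsum : ∑ x ∈ X, p x = 1) {x : α} (hx : x ∈ X) : p x * 2 ^ (c x).length < 2 := by
  obtain hnil | ⟨v, b, hvb⟩ := (c x).eq_nil_or_concat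
  · have : p x ≤ 1 := hsum ▸ single_le_sum (fun y hy => (hp y hy).le) hx
    rw [hnil, List.length_nil, pow_zero, mul_one]; linarith
  rw [List.concat_eq_append] at hvb
  have hprefix : ∀ w, w <+: v → w ≠ v → w <+: c x ∧ w ≠ c x := fun w hw _ =>
    ⟨hvb ▸ hw.trans (List.prefix_append _ _), fun h => by
      have := hw.length_le; rw [h, hvb] at this; simp at this⟩
  have hv : ∀ w, w <+: v → w ≠ v → 2 ≤ #(codeS X c w) := fun w hw hne =>
    hc.two_le_card_codeS_of_prefix hx (hprefix w hw hne).1 (hprefix w hw hne).2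
  have hxv : x ∈ codeS X c v := (mem_codeS X c).2 ⟨hx, hvb ▸ List.prefix_append _ _⟩
  set R := (codeS X c v).erase x
  have hRpos : 0 < ∑ y ∈ R, p y := by
    obtain ⟨y, hy, hyx⟩ := exists_mem_ne
      (hc.two_le_card_codeS_of_prefix hx (hvb ▸ List.prefix_append _ _) (by simp [hvb])) x
    exact sum_pos (fun z hz => hp z ((mem_codeS X c).1 (mem_of_mem_erase hz)).1)
      ⟨y, mem_erase.2 ⟨hyx, hy⟩⟩
  have hPv : codeP X p c v = p x + ∑ y ∈ R, p y := (add_sum_erase _ _ hxv).symm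
  -- `T` is the lighter of `{x}` and `R`, so that what remains still weighs at least `p x`.
  obtain ⟨T, hT, ht, hxT⟩ : ∃ T ⊆ codeS X c v,
      0 < ∑ y ∈ T, p y ∧ p x ≤ codeP X p c v - ∑ y ∈ T, p y := by
    rcases le_total (p x) (∑ y ∈ R, p y) with h | h
    · exact ⟨{x}, singleton_subset_iff.2 hxv, by simpa using hp x hx, by simp [hPv, h]⟩
    · exact ⟨R, erase_subset _ _, hRpos, by rw [hPv]; linarith⟩
  have hchain := hc.two_pow_length_mul_sub_le hv hT ht
  rw [codeP_nil, hsum] at hchain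
  have : 2 ^ v.length * p x ≤ 2 ^ v.length * (codeP X p c v - ∑ y ∈ T, p y) := by gcongr
  rw [hvb, List.length_append, List.length_singleton, pow_succ]
  linarith

end IsGBSC

lemma lt_one_sub_logb_of_mul_two_pow_lt_two {a : ℝ} (ha : 0 < a) {n : ℕ}
    (h : a * 2 ^ n < 2) : (n : ℝ) < 1 - Real.logb 2 a := by
  have := Real.logb_lt_logb one_lt_two (by positivity) h
  rw [Real.logb_mul ha.ne' (by positivity), Real.logb_pow,
    Real.logb_self_eq_one one_lt_two] at this
  linarith

theorem gbsc_lt_entropy_add_one_general {α : Type*} [DecidableEq α]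
    (X : Finset α) (p : α → ℝ)
    (hp : ∀ x ∈ X, 0 < p x) (hsum : ∑ x ∈ X, p x = 1)
    (c : α → List Bool) (hc : IsGBSC X p c) :
    ∑ x ∈ X, p x * ((c x).length : ℝ) <
      (∑ x ∈ X, -(p x * Real.logb 2 (p x))) + 1 := by
  have hX : X.Nonempty := nonempty_of_sum_ne_zero (f := p) (by simp [hsum])
  have hlen : ∀ x ∈ X, p x * ((c x).length : ℝ) < -(p x * Real.logb 2 (p x)) + p x :=
    fun x hx => by
      have := lt_one_sub_logb_of_mul_two_pow_lt_two (hp x hx)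
        (hc.mul_two_pow_length_lt_two hp hsum hx)
      nlinarith [hp x hx]
  calc ∑ x ∈ X, p x * ((c x).length : ℝ)
      < ∑ x ∈ X, (-(p x * Real.logb 2 (p x)) + p x) := sum_lt_sum_of_nonempty hX hlen
    _ = (∑ x ∈ X, -(p x * Real.logb 2 (p x))) + 1 := by rw [sum_add_distrib, hsum]

/-- The expected code length of a GBSC code is less than `H(X) + 1`, where
`H(X) = ∑ -p x * log₂ (p x)` is the entropy of the distribution `p`. -/
theorem gbsc_lt_entropy_add_one {α : Type*} [DecidableEq α]
    (X : Finset α) (hX : X.Nonempty) (p : α → ℝ)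
    (hp : ∀ x ∈ X, 0 < p x) (hsum : ∑ x ∈ X, p x = 1)
    (c : α → List Bool) (hc : IsGBSC X p c) :
    ∑ x ∈ X, p x * ((c x).length : ℝ) <
      (∑ x ∈ X, -(p x * Real.logb 2 (p x))) + 1 :=
  gbsc_lt_entropy_add_one_general X p hp hsum c hc
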